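/- Let C be a small Z₊-category in which every full subcategory with one object is Z₊-isomorphic to [0]_cyc and every full subcategory with two objects is Z₊-isomorphic to [1]_cyc. Then C is Z₊-isomorphic to A_cyc for some linearly ordered set A. (Drinfeld's Proposition: (iii) ⟹ (i).) -/

import Mathlib

/-!
Z₊-categories (Drinfeld, "On the notion of geometric realization", §2):
a Z₊-category is a category `C` together with a morphism of monoids
`Z₊ → End(id_C)`, i.e. a compatible family of endomorphisms `1_c`.
-/

open CategoryTheory

universe v u

/-- A Z₊-category: a category with a natural endomorphism `1` of the identity
functor (equivalently, a morphism of monoids `Z₊ → End (id_C)`). -/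
class ZPlus (C : Type u) [Category.{v} C] where
  one : ∀ c : C, c ⟶ c
  one_natural : ∀ {c d : C} (f : c ⟶ d), one c ≫ f = f ≫ one d

/-- `(1_c)ⁿ`. -/
def ZPlus.onePow {C : Type u} [Category.{v} C] [ZPlus C] (c : C) : ℕ → (c ⟶ c)
  | 0 => 𝟙 c
  | n + 1 => ZPlus.onePow c n ≫ ZPlus.one c

/-- A Z₊-functor: a functor preserving the distinguished endomorphisms. -/
def IsZFunctor {C : Type*} {D : Type*} [Category C] [Category D] [ZPlus C] [ZPlus D]
    (G : C ⥤ D) : Prop :=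
  ∀ c : C, G.map (ZPlus.one c) = ZPlus.one (G.obj c)

/-- An isomorphism of categories: a functor with a strict two-sided inverse. -/
def IsCatIso {C : Type*} {D : Type*} [Category C] [Category D] (G : C ⥤ D) : Prop :=
  ∃ G' : D ⥤ C, G ⋙ G' = 𝟭 C ∧ G' ⋙ G = 𝟭 D

/-- A Z₊-isomorphism: a Z₊-functor which is an isomorphism of categories. -/
def IsZIso {C : Type*} {D : Type*} [Category C] [Category D] [ZPlus C] [ZPlus D]
    (G : C ⥤ D) : Prop :=
  IsZFunctor G ∧ IsCatIso G

/-- A full subcategory of a Z₊-category is a Z₊-category. -/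
instance {C : Type u} [Category.{v} C] [ZPlus C] (Z : C → Prop) :
    ZPlus (ObjectProperty.FullSubcategory Z) where
  one c := ⟨(ZPlus.one c.obj : c.obj ⟶ c.obj)⟩
  one_natural {c d} f := by ext; exact ZPlus.one_natural (C := C) (f.hom : c.obj ⟶ d.obj)

/-- `[0]_cyc`: the Z₊-category with one object whose endomorphism monoid is
`(Z₊, +)`, with `1` the generator. -/
def ZeroCyc : Type := SingleObj (Multiplicative ℕ)

instance : Category ZeroCyc := inferInstanceAs (Category (SingleObj (Multiplicative ℕ)))

instance : ZPlus ZeroCyc where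
  one _ := (Multiplicative.ofAdd 1 : Multiplicative ℕ)
  one_natural {c d} f :=
    mul_comm (G := Multiplicative ℕ) f (Multiplicative.ofAdd 1)

/-- `[1]_cyc`: the Z₊-category with two objects `0`, `1`, in which each hom-set
is a free Z₊-torsor; the morphism `n : x ⟶ y` represents `a·1ⁿ` (resp. `b·1ⁿ`,
`1ⁿ`), where `a : 0 → 1` and `b : 1 → 0` are the generators, with `b∘a = 1₀`
and `a∘b = 1₁`. -/
def OneCyc : Type := Bool

instance : DecidableEq OneCyc := instDecidableEqBool

/-- Composition in `[1]_cyc`: torsor indices add, with a carry when both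
morphisms change the object (since `b∘a = 1₀` and `a∘b = 1₁`). -/
def ocomp (x y z : OneCyc) (n m : ℕ) : ℕ :=
  n + m + (if x ≠ y ∧ y ≠ z then 1 else 0)

instance : Category OneCyc where
  Hom _ _ := ℕ
  id _ := (0 : ℕ)
  comp {x y z} n m := ocomp x y z n m
  id_comp {x y} f := by simp [ocomp]
  comp_id {x y} f := by simp [ocomp]
  assoc {a b c d} f g h := by
    show ocomp a c d (ocomp a b c f g) h = ocomp a b d f (ocomp b c d g h)
    cases a <;> cases b <;> cases c <;> cases d <;> simp [ocomp, OneCyc] <;> omega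

instance : ZPlus OneCyc where
  one _ := (1 : ℕ)
  one_natural {c d} f := by
    show ocomp c c d 1 f = ocomp c d d f 1
    cases c <;> cases d <;> simp [ocomp, OneCyc] <;> omega

/-- Hypothesis: every full subcategory of `C` with one object is Z₊-isomorphic
to `[0]_cyc`. -/
def OneObjHyp (C : Type u) [Category.{v} C] [ZPlus C] : Prop :=
  ∀ x : C, ∃ Φ : ObjectProperty.FullSubcategory (fun c : C => c = x) ⥤ ZeroCyc, IsZIso Φ

/-- Hypothesis: every full subcategory of `C` with two objects is Z₊-isomorphic
to `[1]_cyc`. -/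
def TwoObjHyp (C : Type u) [Category.{v} C] [ZPlus C] : Prop :=
  ∀ x y : C, x ≠ y →
    ∃ Φ : ObjectProperty.FullSubcategory (fun c : C => c = x ∨ c = y) ⥤ OneCyc, IsZIso Φ
/-!
The Z₊-category `A_cyc` associated with a small category `A` (Drinfeld §2,
Example 4): it has the same objects as `A` and is generated by the morphisms
of `A` together with generators `f* : c₂ ⟶ c₁` for each `f : c₁ ⟶ c₂` of `A`,
subject to the relations `(g∘f)*∘g = f*` and `f∘(g∘f)* = g*`; its
Z₊-structure is `1_c := (id_c)*`.
-/

/-- The quiver with the objects of `A`, whose arrows `a ⟶ b` are the morphisms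
`a ⟶ b` of `A` together with a formal arrow `f*` for each morphism `f : b ⟶ a`
of `A`. -/
def CycQuiver (A : Type u) [Category.{v} A] : Type u := A

instance CycQuiver.quiver (A : Type u) [Category.{v} A] : Quiver (CycQuiver A) :=
  ⟨fun a b => ((show A from a) ⟶ (show A from b)) ⊕ ((show A from b) ⟶ (show A from a))⟩

/-- The defining relations of `A_cyc`: the morphisms of `A` compose as in `A`
(including identities), and `(g∘f)*∘g = f*`, `f∘(g∘f)* = g*`.
(In Lean's diagrammatic order: `g ≫ (f ≫ g)* = f*` and `(f ≫ g)* ≫ f = g*`.) -/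
inductive cycRel (A : Type u) [Category.{v} A] :
    HomRel (Paths (CycQuiver A))
  | id (a : A) :
      cycRel A (Quiver.Hom.toPath (Sum.inl (𝟙 a))) (𝟙 (show Paths (CycQuiver A) from a))
  | comp {a b c : A} (f : a ⟶ b) (g : b ⟶ c) :
      cycRel A (Quiver.Hom.toPath (Sum.inl f) ≫ Quiver.Hom.toPath (Sum.inl g))
        (Quiver.Hom.toPath (Sum.inl (f ≫ g)))
  | star1 {a b c : A} (f : a ⟶ b) (g : b ⟶ c) :
      cycRel A (Quiver.Hom.toPath (Sum.inl g) ≫ Quiver.Hom.toPath (Sum.inr (f ≫ g)))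
        (Quiver.Hom.toPath (Sum.inr f))
  | star2 {a b c : A} (f : a ⟶ b) (g : b ⟶ c) :
      cycRel A (Quiver.Hom.toPath (Sum.inr (f ≫ g)) ≫ Quiver.Hom.toPath (Sum.inl f))
        (Quiver.Hom.toPath (Sum.inr g))

/-- `A_cyc`: the category generated by `A` and the formal generators `f*`
modulo the relations above. -/
def ACyc (A : Type u) [Category.{v} A] : Type u := CategoryTheory.Quotient (cycRel A)

instance (A : Type u) [Category.{v} A] : Category (ACyc A) :=
  inferInstanceAs (Category (CategoryTheory.Quotient (cycRel A)))

/-- The object of `A_cyc` corresponding to an object of `A`. -/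
def ACyc.obj {A : Type u} [Category.{v} A] (a : A) : ACyc A := ⟨a⟩

/-- The morphism of `A_cyc` coming from a morphism `f` of `A`. -/
def ACyc.ofHom {A : Type u} [Category.{v} A] {a b : A} (f : a ⟶ b) :
    ACyc.obj a ⟶ ACyc.obj b :=
  (CategoryTheory.Quotient.functor (cycRel A)).map (Quiver.Hom.toPath (Sum.inl f))

/-- The formal generator `f* : c₂ ⟶ c₁` associated with `f : c₁ ⟶ c₂`. -/
def ACyc.star {A : Type u} [Category.{v} A] {a b : A} (f : a ⟶ b) :
    ACyc.obj b ⟶ ACyc.obj a :=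
  (CategoryTheory.Quotient.functor (cycRel A)).map (Quiver.Hom.toPath (Sum.inr f))

/-- `1_c := (id_c)*`. -/
def ACyc.one {A : Type u} [Category.{v} A] (a : A) : ACyc.obj a ⟶ ACyc.obj a :=
  ACyc.star (𝟙 a)

section ACycLemmas

variable {A : Type u} [Category.{v} A]

theorem ACyc.star1_eq {a b c : A} (f : a ⟶ b) (g : b ⟶ c) :
    ACyc.ofHom g ≫ ACyc.star (f ≫ g) = ACyc.star f := by
  rw [ACyc.ofHom, ACyc.star, ACyc.star]
  exact (Functor.map_comp _ _ _).symm.trans (CategoryTheory.Quotient.sound _ (cycRel.star1 f g))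

theorem ACyc.star2_eq {a b c : A} (f : a ⟶ b) (g : b ⟶ c) :
    ACyc.star (f ≫ g) ≫ ACyc.ofHom f = ACyc.star g := by
  rw [ACyc.ofHom, ACyc.star, ACyc.star]
  exact (Functor.map_comp _ _ _).symm.trans (CategoryTheory.Quotient.sound _ (cycRel.star2 f g))

theorem ACyc.comp_star_self {a b : A} (f : a ⟶ b) :
    ACyc.ofHom f ≫ ACyc.star f = ACyc.one a := by
  simpa [ACyc.one] using ACyc.star1_eq (𝟙 a) f

theorem ACyc.star_comp_self {a b : A} (f : a ⟶ b) :
    ACyc.star f ≫ ACyc.ofHom f = ACyc.one b := by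
  simpa [ACyc.one] using ACyc.star2_eq f (𝟙 b)

theorem ACyc.one_natural_ofHom {a b : A} (f : a ⟶ b) :
    ACyc.one a ≫ ACyc.ofHom f = ACyc.ofHom f ≫ ACyc.one b := by
  rw [← ACyc.comp_star_self f, Category.assoc, ACyc.star_comp_self f]

theorem ACyc.one_natural_star {a b : A} (f : a ⟶ b) :
    ACyc.one b ≫ ACyc.star f = ACyc.star f ≫ ACyc.one a := by
  rw [← ACyc.star_comp_self f, Category.assoc, ACyc.comp_star_self f]

theorem ACyc.one_natural_gen {a b : CycQuiver A} (e : a ⟶ b) :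
    ACyc.one (show A from a) ≫ (CategoryTheory.Quotient.functor (cycRel A)).map
        (Quiver.Hom.toPath e) =
      (CategoryTheory.Quotient.functor (cycRel A)).map (Quiver.Hom.toPath e) ≫
        ACyc.one (show A from b) := by
  match e with
  | Sum.inl f => exact ACyc.one_natural_ofHom f
  | Sum.inr f => exact ACyc.one_natural_star f

theorem ACyc.one_natural_aux :
    ∀ {a b : Paths (CycQuiver A)} (p : a ⟶ b),
      ACyc.one (show A from a) ≫ (CategoryTheory.Quotient.functor (cycRel A)).map p =
        (CategoryTheory.Quotient.functor (cycRel A)).map p ≫ ACyc.one (show A from b) := by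
  intro a b p
  induction p using Quiver.Path.rec with
  | nil =>
    show ACyc.one (show A from a) ≫ (CategoryTheory.Quotient.functor (cycRel A)).map (𝟙 a) =
      (CategoryTheory.Quotient.functor (cycRel A)).map (𝟙 a) ≫ ACyc.one (show A from a)
    rw [CategoryTheory.Functor.map_id]
    exact Category.comp_id _
  | cons p e ih =>
    rename_i b c
    show ACyc.one (show A from a) ≫ (CategoryTheory.Quotient.functor (cycRel A)).map
        (p ≫ Quiver.Hom.toPath (V := CycQuiver A) e) =
      (CategoryTheory.Quotient.functor (cycRel A)).map
        (p ≫ Quiver.Hom.toPath (V := CycQuiver A) e) ≫ ACyc.one (show A from c)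
    erw [CategoryTheory.Functor.map_comp, ← Category.assoc, ih, Category.assoc,
      ACyc.one_natural_gen e, Category.assoc]
    rfl

theorem ACyc.one_natural {x y : A} (f : ACyc.obj x ⟶ ACyc.obj y) :
    ACyc.one x ≫ f = f ≫ ACyc.one y := by
  refine Quot.inductionOn f fun p => ?_
  exact ACyc.one_natural_aux p

end ACycLemmas


/-- `A_cyc` is a Z₊-category with `1_c := (id_c)*`. -/
instance ACyc.zplus (A : Type u) [Category.{v} A] : ZPlus (ACyc A) where
  one c := ACyc.one (show A from c.as)
  one_natural {c d} f :=
    ACyc.one_natural (x := show A from c.as) (y := show A from d.as) f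

/-!
The hypotheses make every hom-set `x ⟶ y` a free `Z₊`-torsor on a generator `g x y`, with
`g x x = 𝟙 x` and `g x y ≫ g y x = 1_x` for `x ≠ y`. Writing `g x y ≫ g y z = g x z ≫ 1^c(x,y,z)`,
associativity makes `c` a normalized 2-cocycle with `c(x,y,x) = 1`. Cutting at any object `o`,
`a ≤ b :↔ c(o,a,b) = 0` is a linear order, and `c(x,y,z)` is the number of extra times the path
`x → y → z` wraps around the cut compared with `x → z`. This carry depends only on the order, so
`C` and `A_cyc` are both isomorphic to the category of normal forms `g a b ≫ 1ⁿ` built from it.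
-/

namespace ZPlus

variable {C : Type u} [Category.{v} C] [ZPlus C]

theorem onePow_succ (c : C) (n : ℕ) : onePow c (n + 1) = onePow c n ≫ one c := rfl

theorem onePow_one (c : C) : onePow c 1 = one c := Category.id_comp _

theorem onePow_add (c : C) (n m : ℕ) : onePow c (n + m) = onePow c n ≫ onePow c m := by
  induction m with
  | zero => exact (Category.comp_id _).symm
  | succ m ih => rw [← Nat.add_assoc, onePow_succ, onePow_succ, ih, Category.assoc]

theorem onePow_natural {c d : C} (f : c ⟶ d) (n : ℕ) : onePow c n ≫ f = f ≫ onePow d n := by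
  induction n with
  | zero => simp [onePow]
  | succ n ih => rw [onePow_succ, onePow_succ, Category.assoc, one_natural, ← Category.assoc, ih,
      Category.assoc]

end ZPlus

theorem IsZFunctor.map_onePow {C D : Type*} [Category C] [Category D] [ZPlus C] [ZPlus D]
    {G : C ⥤ D} (hG : IsZFunctor G) (c : C) (n : ℕ) :
    G.map (ZPlus.onePow c n) = ZPlus.onePow (G.obj c) n := by
  induction n with
  | zero => exact G.map_id c
  | succ n ih => rw [ZPlus.onePow_succ, ZPlus.onePow_succ, G.map_comp, ih, hG]

theorem IsZIso.comp {C D E : Type*} [Category C] [Category D] [Category E]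
    [ZPlus C] [ZPlus D] [ZPlus E] {F : C ⥤ D} {G : D ⥤ E}
    (hF : IsZIso F) (hG : IsZIso G) : IsZIso (F ⋙ G) := by
  obtain ⟨hFz, F', hFF', hF'F⟩ := hF
  obtain ⟨hGz, G', hGG', hG'G⟩ := hG
  refine ⟨fun c => by simp [hFz c, hGz (F.obj c)], G' ⋙ F', ?_, ?_⟩
  · rw [Functor.assoc, ← Functor.assoc G, hGG', Functor.id_comp, hFF']
  · rw [Functor.assoc, ← Functor.assoc F', hF'F, Functor.id_comp, hG'G]

theorem IsCatIso.faithful {C D : Type*} [Category C] [Category D] {G : C ⥤ D}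
    (h : IsCatIso G) : G.Faithful :=
  have ⟨_, hGG', _⟩ := h
  Functor.Faithful.of_comp_eq hGG'

theorem IsCatIso.full {C D : Type*} [Category C] [Category D] {G : C ⥤ D}
    (h : IsCatIso G) : G.Full := by
  obtain ⟨G', hGG', hG'G⟩ := h
  have := Functor.Faithful.of_comp_eq hG'G
  exact Functor.Full.of_comp_faithful_iso (eqToIso hGG')

theorem IsCatIso.obj_injective {C D : Type*} [Category C] [Category D] {G : C ⥤ D}
    (h : IsCatIso G) : Function.Injective G.obj := fun a b hab => by
  obtain ⟨G', hGG', -⟩ := h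
  rw [← Functor.id_obj a, ← Functor.id_obj b, ← hGG', Functor.comp_obj, Functor.comp_obj, hab]

theorem isZFunctor_ι {C : Type u} [Category.{v} C] [ZPlus C] (Z : C → Prop) :
    IsZFunctor (ObjectProperty.ι Z) := fun _ => rfl

section Carry

variable {A : Type*} [LinearOrder A]

/-- Going upwards from `x` to `y` in the cyclic order on `A` passes the cut iff `y < x`. -/
def wrap (x y : A) : ℕ := if y < x then 1 else 0

/-- The truncated subtraction is harmless by `wrap_le_wrap_add_wrap`. -/
def carry (x y z : A) : ℕ := wrap x y + wrap y z - wrap x z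

theorem wrap_le_wrap_add_wrap (x y z : A) : wrap x z ≤ wrap x y + wrap y z := by
  unfold wrap
  split_ifs <;> first | omega | order

theorem carry_self_left (x z : A) : carry x x z = 0 := by simp [carry, wrap]

theorem carry_self_right (x z : A) : carry x z z = 0 := by simp [carry, wrap]

theorem carry_add_carry (x y z w : A) :
    carry x y z + carry x z w = carry y z w + carry x y w := by
  have := wrap_le_wrap_add_wrap x y z
  have := wrap_le_wrap_add_wrap x z w
  have := wrap_le_wrap_add_wrap y z w
  have := wrap_le_wrap_add_wrap x y w
  unfold carry
  omega

end Carry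

theorem exists_linearOrder_carry_eq {X : Type*} (c : X → X → X → ℕ)
    (self_right : ∀ x y, c x y y = 0) (loop : ∀ x y, x ≠ y → c x y x = 1)
    (cocycle : ∀ x y z w, c x y z + c x z w = c y z w + c x y w) :
    ∃ _ : LinearOrder X, ∀ x y z, c x y z = carry x y z := by
  rcases isEmpty_or_nonempty X with hX | ⟨⟨o⟩⟩
  · exact ⟨IsWellOrder.linearOrder WellOrderingRel, isEmptyElim⟩
  have swap : ∀ a b, a ≠ b → c o a b + c o b a = 1 := fun a b hab => by
    have := cocycle o a b a
    rw [loop a b hab, self_right] at this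
    omega
  let _ : LinearOrder X :=
    { le a b := c o a b = 0
      le_refl a := self_right o a
      le_trans a b d hab hbd := by have := cocycle o a b d; omega
      le_antisymm a b hab hba := by_contra fun h => by have := swap a b h; omega
      le_total a b := by
        by_cases h : a = b
        · exact Or.inl (h ▸ self_right o a)
        · have := swap a b h; omega
      toDecidableLE := Classical.decRel _ }
  have hwrap : ∀ a b, c o a b = wrap a b := fun a b => by
    by_cases hab : a = b
    · simp [hab, wrap, self_right]
    · have := swap a b hab
      unfold wrap
      split_ifs with hlt
      · have : c o b a = 0 ∧ ¬ c o a b = 0 := hlt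
        omega
      · have : ¬ (c o b a = 0 ∧ ¬ c o a b = 0) := hlt
        omega
  refine ⟨inferInstance, fun x y z => ?_⟩
  have := cocycle o x y z
  rw [hwrap, hwrap, hwrap] at this
  unfold carry
  omega

/-- `n : a ⟶ b` stands for the normal form `g_{ab} ≫ 1ⁿ`. -/
structure NormalForms (A : Type u) [LinearOrder A] : Type u where
  as : A

namespace NormalForms

variable {A : Type u} [LinearOrder A]

instance category : Category (NormalForms A) where
  Hom _ _ := ℕ
  id _ := (0 : ℕ)
  comp {a b c} n m := (n : ℕ) + m + carry a.as b.as c.as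
  id_comp {a b} n := by
    rw [carry_self_left]
    omega
  comp_id {a b} n := by
    rw [carry_self_right]
    omega
  assoc {a b c d} n m k := by
    have := carry_add_carry a.as b.as c.as d.as
    omega

instance zplus : ZPlus (NormalForms A) where
  one _ := (1 : ℕ)
  one_natural {a b} n := by
    change 1 + (show ℕ from n) + carry a.as a.as b.as =
      (show ℕ from n) + 1 + carry a.as b.as b.as
    rw [carry_self_left, carry_self_right]
    omega

theorem onePow_eq (a : NormalForms A) (n : ℕ) : ZPlus.onePow a n = (n : ℕ) := by
  induction n with
  | zero => rfl
  | succ n ih =>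
    rw [ZPlus.onePow_succ, ih]
    exact congrArg (n + 1 + ·) (carry_self_left a.as a.as)

variable {D : Type*} [Category D] [ZPlus D]

def lift (F : A → D) (g : ∀ a b, F a ⟶ F b) (g_self : ∀ a, g a a = 𝟙 (F a))
    (g_comp : ∀ a b c, g a b ≫ g b c = g a c ≫ ZPlus.onePow (F c) (carry a b c)) :
    NormalForms A ⥤ D where
  obj a := F a.as
  map {a b} n := g a.as b.as ≫ ZPlus.onePow (F b.as) n
  map_id a := by
    change g a.as a.as ≫ 𝟙 _ = _
    rw [g_self, Category.comp_id]
  map_comp {a b c} n m := by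
    change g a.as c.as ≫ ZPlus.onePow (F c.as) ((show ℕ from n) + m + carry a.as b.as c.as) = _
    rw [Category.assoc, ← Category.assoc (ZPlus.onePow (F b.as) _), ZPlus.onePow_natural,
      Category.assoc, ← Category.assoc, g_comp, Category.assoc, ← ZPlus.onePow_add,
      ← ZPlus.onePow_add, Nat.add_comm (carry a.as b.as c.as)]

theorem lift_isZFunctor (F : A → D) (g : ∀ a b, F a ⟶ F b) (g_self : ∀ a, g a a = 𝟙 (F a))
    (g_comp : ∀ a b c, g a b ≫ g b c = g a c ≫ ZPlus.onePow (F c) (carry a b c)) :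
    IsZFunctor (lift F g g_self g_comp) := fun a => by
  change g a.as a.as ≫ ZPlus.onePow (F a.as) 1 = _
  rw [g_self, Category.id_comp, ZPlus.onePow_one]
  rfl

end NormalForms

namespace ACyc

section Category

variable {A : Type u} [Category.{v} A]

theorem ofHom_id (a : A) : ofHom (𝟙 a) = 𝟙 (obj a) :=
  (CategoryTheory.Quotient.sound _ (cycRel.id a)).trans ((Quotient.functor (cycRel A)).map_id _)

theorem ofHom_comp {a b c : A} (f : a ⟶ b) (g : b ⟶ c) :
    ofHom f ≫ ofHom g = ofHom (f ≫ g) :=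
  (Functor.map_comp _ _ _).symm.trans (CategoryTheory.Quotient.sound _ (cycRel.comp f g))

theorem star_comp_star {a b c : A} (f : a ⟶ b) (g : b ⟶ c) :
    star g ≫ star f = star (f ≫ g) ≫ one a := by
  rw [← star1_eq f g, ← Category.assoc, star_comp_self g, one_natural_star]

theorem onePow_one (a : A) : ZPlus.onePow (obj a) 1 = one a := ZPlus.onePow_one _

end Category

variable {A : Type u} [LinearOrder A]

def gen (a b : A) : obj a ⟶ obj b :=
  if h : a ≤ b then ofHom (homOfLE h) else star (homOfLE (le_of_not_ge h))

theorem gen_of_le {a b : A} (h : a ≤ b) : gen a b = ofHom (homOfLE h) := dif_pos h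

theorem gen_of_lt {a b : A} (h : b < a) : gen a b = star (homOfLE h.le) := dif_neg h.not_ge

theorem gen_self (a : A) : gen a a = 𝟙 (obj a) := by
  rw [gen_of_le le_rfl, ← ofHom_id]
  rfl

theorem gen_comp (a b c : A) :
    gen a b ≫ gen b c = gen a c ≫ ZPlus.onePow (obj c) (carry a b c) := by
  rcases le_or_gt a b with hab | hba <;> rcases le_or_gt b c with hbc | hcb
  · have hac := hab.trans hbc
    rw [show carry a b c = 0 by simp [carry, wrap, hab.not_gt, hbc.not_gt, hac.not_gt],
      gen_of_le hab, gen_of_le hbc, gen_of_le hac, ofHom_comp]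
    exact (Category.comp_id _).symm
  · rcases le_or_gt a c with hac | hca
    · rw [show carry a b c = 1 by simp [carry, wrap, hab.not_gt, hcb, hac.not_gt],
        gen_of_le hab, gen_of_lt hcb, gen_of_le hac, onePow_one,
        show homOfLE hab = homOfLE hac ≫ homOfLE hcb.le from rfl, ← ofHom_comp,
        Category.assoc, comp_star_self]
    · rw [show carry a b c = 0 by simp [carry, wrap, hab.not_gt, hcb, hca],
        gen_of_le hab, gen_of_lt hcb, gen_of_lt hca,
        show homOfLE hcb.le = homOfLE hca.le ≫ homOfLE hab from rfl, star1_eq]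
      exact (Category.comp_id _).symm
  · rcases le_or_gt a c with hac | hca
    · rw [show carry a b c = 1 by simp [carry, wrap, hba, hbc.not_gt, hac.not_gt],
        gen_of_lt hba, gen_of_le hbc, gen_of_le hac, onePow_one,
        show homOfLE hbc = homOfLE hba.le ≫ homOfLE hac from rfl, ← ofHom_comp,
        ← Category.assoc, star_comp_self, one_natural_ofHom]
    · rw [show carry a b c = 0 by simp [carry, wrap, hba, hbc.not_gt, hca],
        gen_of_lt hba, gen_of_le hbc, gen_of_lt hca,
        show homOfLE hba.le = homOfLE hbc ≫ homOfLE hca.le from rfl, star2_eq]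
      exact (Category.comp_id _).symm
  · have hca := hcb.trans hba
    rw [show carry a b c = 1 by simp [carry, wrap, hba, hcb, hca],
      gen_of_lt hba, gen_of_lt hcb, gen_of_lt hca, onePow_one, star_comp_star]
    rfl

instance : DecidableEq (CycQuiver A) := inferInstanceAs (DecidableEq A)

/-- For `f : b ⟶ a`, `f*` is `gen a b` if `b < a` but `1_a` if `b = a`. -/
def normalForm (A : Type u) [LinearOrder A] : CycQuiver A ⥤q NormalForms A where
  obj a := ⟨a⟩
  map {a b} e := Sum.elim (fun _ => (0 : ℕ)) (fun _ => (if a = b then 1 else 0 : ℕ)) e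

theorem normalForm_rel : ∀ {a b : Paths (CycQuiver A)} (p q : a ⟶ b), cycRel A p q →
    (Paths.lift (normalForm A)).map p = (Paths.lift (normalForm A)).map q := by
  intro _ _ p q h
  induction h with
  | id a => exact Paths.lift_toPath _ _
  | comp f g =>
    rename_i a b c
    erw [Functor.map_comp, Paths.lift_toPath, Paths.lift_toPath, Paths.lift_toPath]
    change 0 + 0 + carry a b c = 0
    have := leOfHom f
    have := leOfHom g
    unfold carry wrap
    split_ifs <;> first | omega | order
  | star1 f g =>
    rename_i a b c
    erw [Functor.map_comp, Paths.lift_toPath, Paths.lift_toPath, Paths.lift_toPath]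
    change 0 + (if c = a then 1 else 0) + carry b c a = if b = a then 1 else 0
    have := leOfHom f
    have := leOfHom g
    unfold carry wrap
    split_ifs <;> first | omega | order
  | star2 f g =>
    rename_i a b c
    erw [Functor.map_comp, Paths.lift_toPath, Paths.lift_toPath, Paths.lift_toPath]
    change (if c = a then 1 else 0) + 0 + carry c a b = if c = b then 1 else 0
    have := leOfHom f
    have := leOfHom g
    unfold carry wrap
    split_ifs <;> first | omega | order

def toNormalForms (A : Type u) [LinearOrder A] : ACyc A ⥤ NormalForms A :=
  CategoryTheory.Quotient.lift _ (Paths.lift (normalForm A)) fun _ _ => normalForm_rel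

theorem toNormalForms_map_ofHom {a b : A} (f : a ⟶ b) : (toNormalForms A).map (ofHom f) = (0 : ℕ) :=
  Paths.lift_toPath _ _

theorem toNormalForms_map_star {a b : A} (f : a ⟶ b) :
    (toNormalForms A).map (star f) = (if b = a then 1 else 0 : ℕ) :=
  Paths.lift_toPath (normalForm A) (Sum.inr f : (show CycQuiver A from b) ⟶ a)

theorem toNormalForms_isZFunctor : IsZFunctor (toNormalForms A) := fun a =>
  (toNormalForms_map_star (𝟙 (show A from a.as))).trans (if_pos rfl)

theorem toNormalForms_map_gen (a b : A) : (toNormalForms A).map (gen a b) = (0 : ℕ) := by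
  rcases le_or_gt a b with hab | hba
  · rw [gen_of_le hab, toNormalForms_map_ofHom]
  · rw [gen_of_lt hba, toNormalForms_map_star, if_neg hba.ne']

def ofNormalForms (A : Type u) [LinearOrder A] : NormalForms A ⥤ ACyc A :=
  NormalForms.lift obj gen gen_self gen_comp

theorem ofNormalForms_comp_toNormalForms :
    ofNormalForms A ⋙ toNormalForms A = 𝟭 (NormalForms A) := by
  refine CategoryTheory.Functor.ext (fun _ => rfl) fun a b n => ?_
  erw [eqToHom_refl, Category.id_comp, Category.comp_id]
  change (toNormalForms A).map (gen a.as b.as ≫ ZPlus.onePow (obj b.as) n) = n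
  rw [Functor.map_comp, toNormalForms_map_gen, toNormalForms_isZFunctor.map_onePow,
    NormalForms.onePow_eq]
  change 0 + (show ℕ from n) + carry a.as b.as b.as = n
  rw [carry_self_right]
  exact Nat.zero_add n

theorem ofNormalForms_map_toNormalForms_ofHom {a b : A} (f : a ⟶ b) :
    (ofNormalForms A).map ((toNormalForms A).map (ofHom f)) = ofHom f := by
  rw [toNormalForms_map_ofHom]
  change gen a b ≫ 𝟙 _ = _
  rw [Category.comp_id, gen_of_le (leOfHom f)]
  rfl

theorem ofNormalForms_map_toNormalForms_star {a b : A} (f : a ⟶ b) :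
    (ofNormalForms A).map ((toNormalForms A).map (star f)) = star f := by
  rw [toNormalForms_map_star]
  rcases (leOfHom f).eq_or_lt with rfl | hab
  · rw [if_pos rfl]
    change gen a a ≫ ZPlus.onePow (obj a) 1 = _
    rw [gen_self, Category.id_comp, onePow_one, Subsingleton.elim f (𝟙 a)]
    rfl
  · rw [if_neg hab.ne']
    change gen b a ≫ 𝟙 _ = _
    rw [Category.comp_id, gen_of_lt hab]
    rfl

theorem toNormalForms_comp_ofNormalForms : toNormalForms A ⋙ ofNormalForms A = 𝟭 (ACyc A) := by
  refine CategoryTheory.Quotient.lift_unique' _ _ _ (Paths.ext_functor rfl fun a b e => ?_)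
  erw [eqToHom_refl, Category.id_comp, Category.comp_id]
  rcases e with f | f
  · exact ofNormalForms_map_toNormalForms_ofHom f
  · exact ofNormalForms_map_toNormalForms_star f

theorem toNormalForms_isZIso : IsZIso (toNormalForms A) :=
  ⟨toNormalForms_isZFunctor, ofNormalForms A, toNormalForms_comp_ofNormalForms,
    ofNormalForms_comp_toNormalForms⟩

end ACyc

namespace ZPlus

variable {C : Type*} [Category C] [ZPlus C]

def IsFreeGenerator {x y : C} (g : x ⟶ y) : Prop :=
  ∀ f : x ⟶ y, ∃! n : ℕ, f = g ≫ onePow y n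

namespace IsFreeGenerator

variable {x y : C} {g : x ⟶ y}

noncomputable def index (hg : IsFreeGenerator g) (f : x ⟶ y) : ℕ := (hg f).exists.choose

theorem eq_comp_onePow_index (hg : IsFreeGenerator g) (f : x ⟶ y) :
    f = g ≫ onePow y (hg.index f) :=
  (hg f).exists.choose_spec

theorem index_eq (hg : IsFreeGenerator g) {f : x ⟶ y} {n : ℕ} (h : f = g ≫ onePow y n) :
    hg.index f = n :=
  (hg f).unique (hg.eq_comp_onePow_index f) h

theorem unique (hg : IsFreeGenerator g) {g' : x ⟶ y} (hg' : IsFreeGenerator g') : g' = g := by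
  obtain ⟨n, hn, -⟩ := hg g'
  obtain ⟨m, hm, -⟩ := hg' g
  have hloop : g = g ≫ onePow y (n + m) := by rw [onePow_add, ← Category.assoc, ← hn, ← hm]
  have : n + m = 0 := (hg g).unique hloop (Category.comp_id g).symm
  rw [hn, show n = 0 by omega]
  exact Category.comp_id g

theorem of_map {D : Type*} [Category D] [ZPlus D] {Φ : C ⥤ D} [Φ.Faithful]
    (hΦ : IsZFunctor Φ) (hg : IsFreeGenerator (Φ.map g)) : IsFreeGenerator g := fun f => by
  obtain ⟨n, hn, hn_unique⟩ := hg (Φ.map f)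
  refine ⟨n, Φ.map_injective ?_, fun m hm => hn_unique m ?_⟩
  · rw [Φ.map_comp, hΦ.map_onePow, hn]
  · rw [hm, Φ.map_comp, hΦ.map_onePow]

theorem map {D : Type*} [Category D] [ZPlus D] {Φ : C ⥤ D} [Φ.Full] [Φ.Faithful]
    (hΦ : IsZFunctor Φ) (hg : IsFreeGenerator g) : IsFreeGenerator (Φ.map g) := fun f => by
  obtain ⟨n, hn, hn_unique⟩ := hg (Φ.preimage f)
  refine ⟨n, ?_, fun m hm => hn_unique m (Φ.map_injective ?_)⟩
  · dsimp only
    rw [← hΦ.map_onePow, ← Φ.map_comp, ← hn, Φ.map_preimage]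
  · rw [Φ.map_preimage, hm, Φ.map_comp, hΦ.map_onePow]

end IsFreeGenerator

end ZPlus

open ZPlus

theorem ZeroCyc.isFreeGenerator_id (u : ZeroCyc) : IsFreeGenerator (𝟙 u) := by
  have onePow_eq : ∀ n : ℕ, onePow u n = Multiplicative.ofAdd n := fun n => by
    induction n with
    | zero => rfl
    | succ n ih =>
      rw [onePow_succ, ih]
      exact (ofAdd_add 1 n).symm.trans (congrArg _ (Nat.add_comm 1 n))
  intro f
  refine ⟨Multiplicative.toAdd (show Multiplicative ℕ from f), ?_, fun n hn => ?_⟩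
  · dsimp only
    rw [Category.id_comp, onePow_eq]
    rfl
  · rw [hn, Category.id_comp, onePow_eq]
    rfl

theorem OneCyc.isFreeGenerator_zero (u v : OneCyc) : IsFreeGenerator (show u ⟶ v from (0 : ℕ)) := by
  have onePow_eq : ∀ n : ℕ, onePow v n = (n : ℕ) := fun n => by
    induction n with
    | zero => rfl
    | succ n ih =>
      rw [onePow_succ, ih]
      simp [CategoryStruct.comp, ocomp, ZPlus.one]
  have comp_onePow : ∀ n : ℕ, (show u ⟶ v from (0 : ℕ)) ≫ onePow v n = (n : ℕ) := fun n => by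
    rw [onePow_eq]
    simp [CategoryStruct.comp, ocomp]
  intro f
  exact ⟨f, (comp_onePow f).symm, fun n hn => (hn.trans (comp_onePow n)).symm⟩

section Hypotheses

variable {C : Type u} [Category.{v} C] [ZPlus C]

theorem OneObjHyp.isFreeGenerator_id (h0 : OneObjHyp C) (x : C) : IsFreeGenerator (𝟙 x) := by
  obtain ⟨Φ, hΦ, hiso⟩ := h0 x
  have := hiso.faithful
  let X : ObjectProperty.FullSubcategory (fun c : C => c = x) := ⟨x, rfl⟩
  have hX : IsFreeGenerator (𝟙 X) :=
    IsFreeGenerator.of_map hΦ (by rw [Φ.map_id]; exact ZeroCyc.isFreeGenerator_id _)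
  exact hX.map (isZFunctor_ι _)

theorem TwoObjHyp.exists_isFreeGenerator_comp_eq_one (h1 : TwoObjHyp C) {x y : C}
    (hxy : x ≠ y) : ∃ (g : x ⟶ y) (g' : y ⟶ x),
      IsFreeGenerator g ∧ IsFreeGenerator g' ∧ g ≫ g' = ZPlus.one x := by
  obtain ⟨Φ, hΦ, hiso⟩ := h1 x y hxy
  have := hiso.full
  have := hiso.faithful
  let X : ObjectProperty.FullSubcategory (fun c : C => c = x ∨ c = y) := ⟨x, Or.inl rfl⟩
  let Y : ObjectProperty.FullSubcategory (fun c : C => c = x ∨ c = y) := ⟨y, Or.inr rfl⟩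
  have hXY : Φ.obj X ≠ Φ.obj Y := fun h => hxy (congrArg (·.obj) (hiso.obj_injective h))
  let g := Φ.preimage (show Φ.obj X ⟶ Φ.obj Y from (0 : ℕ))
  let g' := Φ.preimage (show Φ.obj Y ⟶ Φ.obj X from (0 : ℕ))
  have hg : IsFreeGenerator g :=
    IsFreeGenerator.of_map hΦ (by rw [Φ.map_preimage]; exact OneCyc.isFreeGenerator_zero _ _)
  have hg' : IsFreeGenerator g' :=
    IsFreeGenerator.of_map hΦ (by rw [Φ.map_preimage]; exact OneCyc.isFreeGenerator_zero _ _)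
  have hgg' : g ≫ g' = ZPlus.one X := Φ.map_injective <| by
    rw [Φ.map_comp, Φ.map_preimage, Φ.map_preimage, hΦ]
    change ocomp (Φ.obj X) (Φ.obj Y) (Φ.obj X) 0 0 = 1
    simp [ocomp, hXY, hXY.symm]
  exact ⟨g.hom, g'.hom, hg.map (isZFunctor_ι _), hg'.map (isZFunctor_ι _),
    congrArg (ObjectProperty.ι _).map hgg'⟩

end Hypotheses

structure FreeGeneratorFamily (C : Type u) [Category.{v} C] [ZPlus C] where
  gen : ∀ x y : C, x ⟶ y
  isFreeGenerator : ∀ x y, IsFreeGenerator (gen x y)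
  gen_self : ∀ x, gen x x = 𝟙 x
  gen_comp_gen : ∀ x y, x ≠ y → gen x y ≫ gen y x = ZPlus.one x

theorem nonempty_freeGeneratorFamily {C : Type u} [Category.{v} C] [ZPlus C]
    (h0 : OneObjHyp C) (h1 : TwoObjHyp C) : Nonempty (FreeGeneratorFamily C) := by
  classical
  have hgen : ∀ x y : C, x ≠ y → ∃ g : x ⟶ y, IsFreeGenerator g := fun x y hxy =>
    let ⟨g, _, hg, _⟩ := h1.exists_isFreeGenerator_comp_eq_one hxy
    ⟨g, hg⟩
  let gen : ∀ x y : C, x ⟶ y := fun x y =>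
    if h : x = y then eqToHom h else (hgen x y h).choose
  have gen_self : ∀ x, gen x x = 𝟙 x := fun x => by simp [gen]
  have isFreeGenerator : ∀ x y, IsFreeGenerator (gen x y) := fun x y => by
    by_cases h : x = y
    · subst h
      rw [gen_self]
      exact h0.isFreeGenerator_id x
    · simp only [gen, dif_neg h]
      exact (hgen x y h).choose_spec
  refine ⟨gen, isFreeGenerator, gen_self, fun x y hxy => ?_⟩
  obtain ⟨g, g', hg, hg', hgg'⟩ := h1.exists_isFreeGenerator_comp_eq_one hxy
  rw [hg.unique (isFreeGenerator x y), hg'.unique (isFreeGenerator y x), hgg']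

namespace FreeGeneratorFamily

variable {C : Type u} [Category.{v} C] [ZPlus C] (S : FreeGeneratorFamily C)

noncomputable def compIndex (x y z : C) : ℕ :=
  (S.isFreeGenerator x z).index (S.gen x y ≫ S.gen y z)

theorem gen_comp_gen_eq (x y z : C) :
    S.gen x y ≫ S.gen y z = S.gen x z ≫ onePow z (S.compIndex x y z) :=
  (S.isFreeGenerator x z).eq_comp_onePow_index _

theorem compIndex_self_right (x y : C) : S.compIndex x y y = 0 :=
  (S.isFreeGenerator x y).index_eq <| by
    rw [S.gen_self, Category.comp_id]
    exact (Category.comp_id _).symm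

theorem compIndex_loop {x y : C} (hxy : x ≠ y) : S.compIndex x y x = 1 :=
  (S.isFreeGenerator x x).index_eq <| by rw [S.gen_comp_gen x y hxy, S.gen_self,
    Category.id_comp, onePow_one]

theorem compIndex_cocycle (x y z w : C) :
    S.compIndex x y z + S.compIndex x z w = S.compIndex y z w + S.compIndex x y w := by
  have hleft : (S.gen x y ≫ S.gen y z) ≫ S.gen z w =
      S.gen x w ≫ onePow w (S.compIndex x z w + S.compIndex x y z) := by
    rw [S.gen_comp_gen_eq x y z, Category.assoc, onePow_natural, ← Category.assoc,
      S.gen_comp_gen_eq x z w, Category.assoc, ← onePow_add]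
  have hright : S.gen x y ≫ S.gen y z ≫ S.gen z w =
      S.gen x w ≫ onePow w (S.compIndex x y w + S.compIndex y z w) := by
    rw [S.gen_comp_gen_eq y z w, ← Category.assoc, S.gen_comp_gen_eq x y w, Category.assoc,
      ← onePow_add]
  have := (S.isFreeGenerator x w _).unique hleft ((Category.assoc _ _ _).trans hright)
  omega

section LinearOrder

/- `C` now carries a linear order as well; `x ⟶ y` still denotes morphisms of the given category,
not of the preorder category, since local instances take precedence. -/
variable [LinearOrder C] (hS : ∀ x y z, S.compIndex x y z = carry x y z)

noncomputable def ofNormalForms : NormalForms C ⥤ C :=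
  NormalForms.lift id S.gen S.gen_self fun x y z => hS x y z ▸ S.gen_comp_gen_eq x y z

noncomputable def toNormalForms : C ⥤ NormalForms C where
  obj x := ⟨x⟩
  map {x y} f := ((S.isFreeGenerator x y).index f : ℕ)
  map_id x := (S.isFreeGenerator x x).index_eq <| by
    rw [S.gen_self]
    exact (Category.comp_id _).symm
  map_comp {x y z} f g := (S.isFreeGenerator x z).index_eq <| by
    have h := (S.ofNormalForms hS).map_comp (X := ⟨x⟩) (Y := ⟨y⟩) (Z := ⟨z⟩)
      ((S.isFreeGenerator x y).index f) ((S.isFreeGenerator y z).index g)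
    conv_lhs => rw [(S.isFreeGenerator x y).eq_comp_onePow_index f,
      (S.isFreeGenerator y z).eq_comp_onePow_index g]
    exact h.symm

theorem toNormalForms_comp_ofNormalForms : S.toNormalForms hS ⋙ S.ofNormalForms hS = 𝟭 C := by
  refine CategoryTheory.Functor.ext (fun _ => rfl) fun x y f => ?_
  erw [eqToHom_refl, Category.id_comp, Category.comp_id]
  exact ((S.isFreeGenerator x y).eq_comp_onePow_index f).symm

theorem ofNormalForms_comp_toNormalForms :
    S.ofNormalForms hS ⋙ S.toNormalForms hS = 𝟭 (NormalForms C) := by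
  refine CategoryTheory.Functor.ext (fun _ => rfl) fun a b n => ?_
  erw [eqToHom_refl, Category.id_comp, Category.comp_id]
  exact (S.isFreeGenerator a.as b.as).index_eq rfl

theorem ofNormalForms_isZIso : IsZIso (S.ofNormalForms hS) :=
  ⟨NormalForms.lift_isZFunctor _ _ _ _, S.toNormalForms hS,
    ofNormalForms_comp_toNormalForms S hS, toNormalForms_comp_ofNormalForms S hS⟩

end LinearOrder

end FreeGeneratorFamily

/-- Drinfeld, Proposition, (iii) ⟹ (i): a small Z₊-category in
which every one-object full subcategory is Z₊-isomorphic to `[0]_cyc` and every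
two-object full subcategory is Z₊-isomorphic to `[1]_cyc` is Z₊-isomorphic to
`A_cyc` for some linearly ordered set `A` (viewed as a category). -/
theorem zcat_is_acyc_of_linear_order (C : Type u) [SmallCategory C] [ZPlus C]
    (h0 : OneObjHyp C) (h1 : TwoObjHyp C) :
    ∃ (A : LinOrd.{u}) (Φ : ACyc A ⥤ C), IsZIso Φ := by
  obtain ⟨S⟩ := nonempty_freeGeneratorFamily h0 h1
  obtain ⟨_, hS⟩ := exists_linearOrder_carry_eq S.compIndex S.compIndex_self_right
    (fun _ _ => S.compIndex_loop) S.compIndex_cocycle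
  exact ⟨LinOrd.of C, ACyc.toNormalForms C ⋙ S.ofNormalForms hS,
    ACyc.toNormalForms_isZIso.comp (S.ofNormalForms_isZIso hS)⟩
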